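/- Let A be a right-symmetric algebra over a commutative ring K, M̃ an A-module, and m ∈ M̃. Define ψ_m : A × A → M̃ by ψ_m(a,b) = m∘(a∘b) − (m∘a)∘b. Then: (i) ψ_m is symmetric, ψ_m(a,b) = ψ_m(b,a) for all a,b; (ii) ψ_m is a right-symmetric 2-cocycle, i.e. d_rsym ψ_m = 0; and (iii) with ω : A → M̃ the linear map ω(a) = m∘a, one has ψ_m(a,b) + d_rsym ω(a,b) = a∘(m∘b) for all a,b, so ψ_m is cohomologous to φ_m(a,b) = a∘(m∘b). -/

import Mathlib

/-!
Symmetry of `ψ_m` is the module axiom `m∘[a,b] = (m∘a)∘b − (m∘b)∘a` read at `m`. In `d_rsym ψ_m`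
the two terms with a left action cancel by symmetry, and the remaining five terms regroup as
`m` acting on the right-symmetry identity for `a, b, c`, minus the module axiom read at `m∘a`.
The cohomology statement is a cancellation of like terms.
-/

section StandardCochain

variable {K A M : Type*} [CommRing K] [AddCommGroup A] [Module K A]
  [AddCommGroup M] [Module K M] (mul : A →ₗ[K] A →ₗ[K] A) (r : M →ₗ[K] A →ₗ[K] M)

def standardCochain (m : M) (a b : A) : M := r m (mul a b) - r (r m a) b

variable {mul r}

theorem standardCochain_comm
    (hMAA : ∀ (m : M) (a b : A), r m (mul a b - mul b a) - r (r m a) b + r (r m b) a = 0)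
    (m : M) (a b : A) :
    standardCochain mul r m a b = standardCochain mul r m b a := by
  have h := hMAA m a b
  rw [map_sub] at h
  unfold standardCochain
  linear_combination (norm := abel) h

theorem standardCochain_rightCoboundary_eq_zero
    (hrs : ∀ a b c : A,
      mul (mul a b) c - mul a (mul b c) = mul (mul a c) b - mul a (mul c b))
    (hMAA : ∀ (m : M) (a b : A), r m (mul a b - mul b a) - r (r m a) b + r (r m b) a = 0)
    (m : M) (a b c : A) :
    -standardCochain mul r m (mul a b) c + standardCochain mul r m (mul a c) b
      + standardCochain mul r m a (mul b c - mul c b)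
      - r (standardCochain mul r m a b) c + r (standardCochain mul r m a c) b = 0 := by
  have hassoc := congrArg (r m) (hrs a b c)
  have hmodule := hMAA (r m a) b c
  unfold standardCochain
  simp only [map_sub, LinearMap.sub_apply] at hassoc hmodule ⊢
  linear_combination (norm := abel) -hmodule - hassoc

end StandardCochain

theorem standard_two_cocycle
    {K A M : Type*} [CommRing K] [AddCommGroup A] [Module K A]
    [AddCommGroup M] [Module K M]
    (mul : A →ₗ[K] A →ₗ[K] A)
    (hrs : ∀ a b c : A,
      mul (mul a b) c - mul a (mul b c) = mul (mul a c) b - mul a (mul c b))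
    (r : M →ₗ[K] A →ₗ[K] M) (l : A →ₗ[K] M →ₗ[K] M)
    (hMAA : ∀ (m : M) (a b : A),
      r m (mul a b - mul b a) - r (r m a) b + r (r m b) a = 0)
    (m : M) :
    -- the standard cochain ψ_m(a,b) = m∘(a∘b) − (m∘a)∘b
    (∀ a b : A, r m (mul a b) - r (r m a) b = r m (mul b a) - r (r m b) a) ∧
    -- ψ_m is a right-symmetric 2-cocycle: d_rsym ψ_m = 0
    (∀ a b c : A,
      (let ψ : A → A → M := fun a b => r m (mul a b) - r (r m a) b
       l a (ψ b c) - l a (ψ c b) - ψ (mul a b) c + ψ (mul a c) b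
         + ψ a (mul b c - mul c b) - r (ψ a b) c + r (ψ a c) b = 0)) ∧
    -- ψ_m + d_rsym ω = φ_m where ω(a) = m∘a and φ_m(a,b) = a∘(m∘b)
    (∀ a b : A,
      (r m (mul a b) - r (r m a) b)
        + (l a (r m b) - r m (mul a b) + r (r m a) b) = l a (r m b)) := by
  refine ⟨standardCochain_comm hMAA m, fun a b c => ?_, fun a b => by abel⟩
  change l a (standardCochain mul r m b c) - l a (standardCochain mul r m c b)
    - standardCochain mul r m (mul a b) c + standardCochain mul r m (mul a c) b
    + standardCochain mul r m a (mul b c - mul c b)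
    - r (standardCochain mul r m a b) c + r (standardCochain mul r m a c) b = 0
  rw [standardCochain_comm hMAA m c b, sub_self, zero_sub]
  exact standardCochain_rightCoboundary_eq_zero hrs hMAA m a b c
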